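/- For a fixed sign ε = ±1, let ∇ be the Type B connection 𝒫₋₂,₀^ε on M = (0,∞)×ℝ with constants C₁₁¹ = −1, C₁₁² = 0, C₁₂¹ = 0, C₁₂² = 0, C₂₂¹ = ε, C₂₂² = 0. Then a smooth function f on M is an affine gradient Ricci soliton for ∇ if and only if f(x¹,x²) = −2 log(x¹) + c₁x² + c₀ for some constants c₀, c₁ ∈ ℝ. -/

import Mathlib

noncomputable section

/-- The coordinate directions of ℝ². -/
def ee : Fin 2 → ℝ × ℝ := ![(1, 0), (0, 1)]

/-- Partial derivative `∂_i f`. -/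
def pd (i : Fin 2) (f : ℝ × ℝ → ℝ) : ℝ × ℝ → ℝ :=
  fun p => fderiv ℝ f p (ee i)

/-- The underlying manifold `M = (0,∞) × ℝ` of a Type B geometry. -/
def MB : Set (ℝ × ℝ) := {p | 0 < p.1}

/-- Christoffel symbols `Γ_{ij}^k = C_{ij}^k / x¹` of a Type B connection on `(0,∞)×ℝ`. -/
def GammaB (C : Fin 2 → Fin 2 → Fin 2 → ℝ) (i j k : Fin 2) : ℝ × ℝ → ℝ :=
  fun p => C i j k / p.1

/-- Ricci tensor of a Type B connection. -/
def ricciB (C : Fin 2 → Fin 2 → Fin 2 → ℝ) (j k : Fin 2) : ℝ × ℝ → ℝ :=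
  fun p => (∑ i, (pd i (GammaB C j k i) p - pd j (GammaB C i k i) p))
    + ∑ i, ∑ q, (GammaB C i q i p * GammaB C j k q p - GammaB C j q i p * GammaB C i k q p)

/-- Symmetrized Ricci tensor of a Type B connection. -/
def ricciSymB (C : Fin 2 → Fin 2 → Fin 2 → ℝ) (i j : Fin 2) : ℝ × ℝ → ℝ :=
  fun p => (ricciB C i j p + ricciB C j i p) / 2

/-- Hessian `H(f)_{ij} = ∂_i∂_j f − Σ_k Γ_{ij}^k ∂_k f` of a Type B connection. -/
def hessB (C : Fin 2 → Fin 2 → Fin 2 → ℝ) (f : ℝ × ℝ → ℝ) (i j : Fin 2) : ℝ × ℝ → ℝ :=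
  fun p => pd i (pd j f) p - ∑ k, GammaB C i j k p * pd k f p

/-- `f` is an affine gradient Ricci soliton for the Type B connection determined by `C`:
`H(f)_{ij} + ρ^s_{ij} = 0` on `M`. -/
def IsSolitonB (C : Fin 2 → Fin 2 → Fin 2 → ℝ) (f : ℝ × ℝ → ℝ) : Prop :=
  ∀ i j : Fin 2, ∀ p : ℝ × ℝ, 0 < p.1 → hessB C f i j p + ricciSymB C i j p = 0

/-! ### Auxiliary lemmas -/

lemma ee0 : ee 0 = (1,0) := rfl
lemma ee1 : ee 1 = (0,1) := rfl

lemma clm_apply_basis (L : ℝ×ℝ →L[ℝ] ℝ) (v : ℝ×ℝ) :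
    L v = v.1 * L (1,0) + v.2 * L (0,1) := by
  have h : v = v.1 • ((1:ℝ),(0:ℝ)) + v.2 • ((0:ℝ),(1:ℝ)) := by
    ext <;> simp
  conv_lhs => rw [h]
  rw [map_add, map_smul, map_smul, smul_eq_mul, smul_eq_mul]

lemma clm_zero (L : ℝ×ℝ →L[ℝ] ℝ) (h0 : L (1,0) = 0) (h1 : L (0,1) = 0) : L = 0 :=
  ContinuousLinearMap.ext fun v => by
    rw [ContinuousLinearMap.zero_apply, clm_apply_basis, h0, h1]; ring

lemma isOpen_MB : IsOpen MB := isOpen_lt continuous_const continuous_fst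

lemma convex_MB : Convex ℝ MB := by
  have h : MB = Set.Ioi (0:ℝ) ×ˢ (Set.univ : Set ℝ) := by
    ext p; simp [MB, Set.mem_prod, Set.mem_Ioi]
  rw [h]; exact (convex_Ioi 0).prod convex_univ

lemma const_MB {g : ℝ×ℝ → ℝ} (h : ∀ p ∈ MB, HasFDerivAt g (0 : ℝ×ℝ →L[ℝ] ℝ) p)
    {p q : ℝ×ℝ} (hp : p ∈ MB) (hq : q ∈ MB) : g p = g q := by
  have := convex_MB.norm_image_sub_le_of_norm_hasFDerivWithin_le
    (C := 0) (f' := fun _ => (0 : ℝ×ℝ →L[ℝ] ℝ)) (fun x hx => (h x hx).hasFDerivWithinAt)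
    (fun x _ => by simp) hq hp
  simp only [zero_mul, norm_le_zero_iff, sub_eq_zero] at this
  exact this

lemma pd_eq_of_hasFDerivAt {g : ℝ×ℝ → ℝ} {L : ℝ×ℝ →L[ℝ] ℝ} {p : ℝ×ℝ}
    (h : HasFDerivAt g L p) (i : Fin 2) : pd i g p = L (ee i) := by
  unfold pd; rw [h.fderiv]

lemma pd_congr {g h : ℝ×ℝ → ℝ} {p : ℝ×ℝ} (he : g =ᶠ[nhds p] h) (i : Fin 2) :
    pd i g p = pd i h p := by
  unfold pd; rw [he.fderiv_eq]

lemma pd_const (c : ℝ) (i : Fin 2) (p : ℝ×ℝ) : pd i (fun _ => c) p = 0 := by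
  simp [pd]

lemma hasFDerivAt_cdiv (c : ℝ) {p : ℝ×ℝ} (hp : p.1 ≠ 0) :
    HasFDerivAt (fun q : ℝ×ℝ => c / q.1)
      (c • ((-(p.1^2)⁻¹) • ContinuousLinearMap.fst ℝ ℝ ℝ)) p := by
  have h : HasFDerivAt (fun q : ℝ×ℝ => c * (q.1)⁻¹)
      (c • ((-(p.1^2)⁻¹) • ContinuousLinearMap.fst ℝ ℝ ℝ)) p :=
    ((hasDerivAt_inv hp).comp_hasFDerivAt p hasFDerivAt_fst).const_mul c
  simpa [div_eq_mul_inv] using h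

lemma pd0_cdiv (c : ℝ) {p : ℝ×ℝ} (hp : p.1 ≠ 0) :
    pd 0 (fun q : ℝ×ℝ => c / q.1) p = -(c / p.1^2) := by
  rw [pd_eq_of_hasFDerivAt (hasFDerivAt_cdiv c hp) 0, ee0]
  simp [div_eq_mul_inv]

lemma pd1_cdiv (c : ℝ) {p : ℝ×ℝ} (hp : p.1 ≠ 0) :
    pd 1 (fun q : ℝ×ℝ => c / q.1) p = 0 := by
  rw [pd_eq_of_hasFDerivAt (hasFDerivAt_cdiv c hp) 1, ee1]
  simp

lemma contDiffAt_pd {g : ℝ×ℝ → ℝ} {p : ℝ×ℝ} (i : Fin 2) (hg : ContDiffAt ℝ (⊤ : ℕ∞) g p) :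
    ContDiffAt ℝ (⊤ : ℕ∞) (pd i g) p :=
  (hg.fderiv_right (by simp)).clm_apply contDiffAt_const

lemma hess_formula (C : Fin 2 → Fin 2 → Fin 2 → ℝ) (f : ℝ × ℝ → ℝ) (i j : Fin 2) (p : ℝ×ℝ) :
    hessB C f i j p = pd i (pd j f) p
      - (C i j 0 / p.1 * pd 0 f p + C i j 1 / p.1 * pd 1 f p) := by
  simp [hessB, Fin.sum_univ_two, GammaB]

/-- for the Type B connection `𝒫₋₂,₀^ε` (ε = ±1), a smooth function `f`
on `M` is an affine gradient Ricci soliton iff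
`f(x¹,x²) = −2 log(x¹) + c₁x² + c₀` for some constants `c₀, c₁`. -/
theorem stmt17 (ε : ℝ) (hε : ε = 1 ∨ ε = -1)
    (C : Fin 2 → Fin 2 → Fin 2 → ℝ)
    (hC : ∀ i j k, C i j k = C j i k)
    (c1 : C 0 0 0 = -1) (c2 : C 0 0 1 = 0) (c3 : C 0 1 0 = 0)
    (c4 : C 0 1 1 = 0) (c5 : C 1 1 0 = ε) (c6 : C 1 1 1 = 0)
    (f : ℝ × ℝ → ℝ) (hf : ContDiffOn ℝ (⊤ : ℕ∞) f MB) :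
    IsSolitonB C f ↔
      ∃ c₀ c₁ : ℝ, ∀ p : ℝ × ℝ, 0 < p.1 →
        f p = -2 * Real.log p.1 + c₁ * p.2 + c₀ := by
  have hε0 : ε ≠ 0 := by rcases hε with h | h <;> rw [h] <;> norm_num
  have c7 : C 1 0 0 = 0 := (hC 1 0 0).trans c3
  have c8 : C 1 0 1 = 0 := (hC 1 0 1).trans c4
  -- Ricci tensor values
  have hric : ∀ p : ℝ×ℝ, 0 < p.1 →
      ricciB C 0 0 p = 0 ∧ ricciB C 0 1 p = 0 ∧ ricciB C 1 0 p = 0 ∧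
        ricciB C 1 1 p = -2*ε/p.1^2 := by
    intro p hp
    have hne : p.1 ≠ 0 := ne_of_gt hp
    have h0 : ∀ c : ℝ, pd 0 (fun q : ℝ×ℝ => c / q.1) p = -(c / p.1^2) :=
      fun c => pd0_cdiv c hne
    have h1 : ∀ c : ℝ, pd 1 (fun q : ℝ×ℝ => c / q.1) p = 0 :=
      fun c => pd1_cdiv c hne
    have hGa : ∀ a b k : Fin 2, GammaB C a b k = fun q : ℝ×ℝ => C a b k / q.1 :=
      fun _ _ _ => rfl
    refine ⟨?_, ?_, ?_, ?_⟩ <;>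
      · simp only [ricciB, Fin.sum_univ_two, hGa, h0, h1, c1, c2, c3, c4, c5, c6, c7, c8]
        field_simp
        try ring
  have hricS : ∀ p : ℝ×ℝ, 0 < p.1 →
      ricciSymB C 0 0 p = 0 ∧ ricciSymB C 0 1 p = 0 ∧ ricciSymB C 1 0 p = 0 ∧
        ricciSymB C 1 1 p = -2*ε/p.1^2 := by
    intro p hp
    obtain ⟨r1, r2, r3, r4⟩ := hric p hp
    refine ⟨?_, ?_, ?_, ?_⟩ <;> simp [ricciSymB, r1, r2, r3, r4] <;> ring
  constructor
  · -- soliton → formula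
    intro hs
    -- smoothness facts
    have smf : ∀ p ∈ MB, ContDiffAt ℝ (⊤ : ℕ∞) f p :=
      fun p hp => hf.contDiffAt (isOpen_MB.mem_nhds hp)
    have dpd : ∀ (j : Fin 2), ∀ p ∈ MB, DifferentiableAt ℝ (pd j f) p :=
      fun j p hp => (contDiffAt_pd j (smf p hp)).differentiableAt (by simp)
    -- the four scalar soliton equations
    have E : ∀ p : ℝ×ℝ, 0 < p.1 →
        pd 0 (pd 0 f) p = -(pd 0 f p / p.1) ∧
        pd 0 (pd 1 f) p = 0 ∧
        pd 1 (pd 0 f) p = 0 ∧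
        pd 1 (pd 1 f) p = ε / p.1 * pd 0 f p + 2*ε/p.1^2 := by
      intro p hp
      have hne : p.1 ≠ 0 := ne_of_gt hp
      obtain ⟨r1, r2, r3, r4⟩ := hricS p hp
      have e00 := hs 0 0 p hp
      have e01 := hs 0 1 p hp
      have e10 := hs 1 0 p hp
      have e11 := hs 1 1 p hp
      rw [hess_formula, r1, c1, c2] at e00
      rw [hess_formula, r2, c3, c4] at e01
      rw [hess_formula, r3, c7, c8] at e10
      rw [hess_formula, r4, c5, c6] at e11
      refine ⟨?_, by simpa using e01, by simpa using e10, ?_⟩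
      · field_simp at e00 ⊢
        linarith
      · field_simp at e11 ⊢
        linarith
    have h1MB : (((1:ℝ),(0:ℝ)) : ℝ×ℝ) ∈ MB := by norm_num [MB]
    -- Step B : x · ∂₁f is constant
    set a : ℝ := pd 0 f ((1:ℝ),(0:ℝ)) with ha_def
    have hstep : ∀ p ∈ MB, p.1 * pd 0 f p = a := by
      have hconst : ∀ p ∈ MB, HasFDerivAt (fun q : ℝ×ℝ => q.1 * pd 0 f q)
          (0 : ℝ×ℝ →L[ℝ] ℝ) p := by
        intro p hp
        have hne : p.1 ≠ 0 := ne_of_gt hp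
        have hd : HasFDerivAt (pd 0 f) (fderiv ℝ (pd 0 f) p) p := (dpd 0 p hp).hasFDerivAt
        have hm := hasFDerivAt_fst.mul hd
        have hz : (p.1 • fderiv ℝ (pd 0 f) p
            + pd 0 f p • ContinuousLinearMap.fst ℝ ℝ ℝ) = 0 := by
          apply clm_zero
          · have e : fderiv ℝ (pd 0 f) p ((1:ℝ),(0:ℝ)) = -(pd 0 f p / p.1) := (E p hp).1
            simp only [ContinuousLinearMap.add_apply, ContinuousLinearMap.smul_apply,
              ContinuousLinearMap.coe_fst', smul_eq_mul, e]
            field_simp [hne]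
            ring
          · have e : fderiv ℝ (pd 0 f) p ((0:ℝ),(1:ℝ)) = 0 := (E p hp).2.2.1
            simp only [ContinuousLinearMap.add_apply, ContinuousLinearMap.smul_apply,
              ContinuousLinearMap.coe_fst', smul_eq_mul, e]
            simp
        rw [hz] at hm; exact hm
      intro p hp
      have := const_MB hconst hp h1MB
      simpa using this
    have hA : ∀ p ∈ MB, pd 0 f p = a / p.1 := by
      intro p hp
      have h := hstep p hp
      have hne : p.1 ≠ 0 := ne_of_gt hp
      field_simp
      linarith
    have hB : ∀ p ∈ MB, pd 1 (pd 1 f) p = ε * (a + 2) / p.1^2 := by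
      intro p hp
      have hne : p.1 ≠ 0 := ne_of_gt hp
      have e := (E p hp).2.2.2
      rw [hA p hp] at e
      rw [e]; field_simp
    -- ∂₂ f is constant in the first variable
    have hH : ∀ x y : ℝ, 0 < x → pd 1 f (x, y) = pd 1 f (1, y) := by
      intro x y hx
      have hconst : ∀ p ∈ MB, HasFDerivAt (fun q : ℝ×ℝ => pd 1 f (q.1, y))
          (0 : ℝ×ℝ →L[ℝ] ℝ) p := by
        intro p hp
        have hpy : ((p.1, y) : ℝ×ℝ) ∈ MB := hp
        have hd : HasFDerivAt (pd 1 f) (fderiv ℝ (pd 1 f) (p.1, y)) (p.1, y) :=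
          (dpd 1 _ hpy).hasFDerivAt
        have hι : HasFDerivAt (fun q : ℝ×ℝ => (q.1, y))
            ((ContinuousLinearMap.fst ℝ ℝ ℝ).prod 0) p :=
          hasFDerivAt_fst.prodMk (hasFDerivAt_const y p)
        have hcomp := hd.comp p hι
        have hz : (fderiv ℝ (pd 1 f) (p.1, y)).comp
            ((ContinuousLinearMap.fst ℝ ℝ ℝ).prod 0) = 0 := by
          apply clm_zero
          · have e : fderiv ℝ (pd 1 f) (p.1, y) ((1:ℝ),(0:ℝ)) = 0 := (E (p.1, y) hpy).2.1
            simp only [ContinuousLinearMap.comp_apply, ContinuousLinearMap.prod_apply,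
              ContinuousLinearMap.coe_fst', ContinuousLinearMap.zero_apply]
            exact e
          · simp only [ContinuousLinearMap.comp_apply, ContinuousLinearMap.prod_apply,
              ContinuousLinearMap.coe_fst', ContinuousLinearMap.zero_apply]
            have : (((0:ℝ),(1:ℝ)).1, (0:ℝ)) = ((0:ℝ×ℝ)) := by norm_num
            rw [this, map_zero]
        rw [hz] at hcomp; exact hcomp
      have h := const_MB hconst (show ((x, y) : ℝ×ℝ) ∈ MB from hx)
        (by norm_num [MB] : ((1, y) : ℝ×ℝ) ∈ MB)
      simpa using h
    -- second vertical derivatives agree across the first variable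
    have hV : ∀ x y : ℝ, 0 < x → pd 1 (pd 1 f) (x, y) = pd 1 (pd 1 f) (1, y) := by
      intro x y hx
      have hx1 : ((x, y) : ℝ×ℝ) ∈ MB := hx
      have h1y : ((1, y) : ℝ×ℝ) ∈ MB := by norm_num [MB]
      have hcurve : ∀ z : ℝ, HasDerivAt (fun t : ℝ => ((z : ℝ), t)) (0, 1) y :=
        fun z => (hasDerivAt_const y z).prodMk (hasDerivAt_id y)
      have k1 : HasDerivAt (fun t => pd 1 f (x, t)) (fderiv ℝ (pd 1 f) (x, y) (0, 1)) y := by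
        have h := ((dpd 1 _ hx1).hasFDerivAt).comp_hasDerivAt y (hcurve x)
        exact h
      have k2 : HasDerivAt (fun t => pd 1 f (1, t)) (fderiv ℝ (pd 1 f) (1, y) (0, 1)) y := by
        have h := ((dpd 1 _ h1y).hasFDerivAt).comp_hasDerivAt y (hcurve 1)
        exact h
      have keq : (fun t => pd 1 f (x, t)) = (fun t => pd 1 f (1, t)) :=
        funext fun t => hH x t hx
      rw [keq] at k1
      exact k1.unique k2
    -- conclude a = -2
    have ha2 : a = -2 := by
      have h2 := hV 2 0 two_pos
      have e1 : pd 1 (pd 1 f) ((2:ℝ), (0:ℝ)) = ε * (a + 2) / (2:ℝ)^2 :=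
        hB ((2:ℝ),(0:ℝ)) (by norm_num [MB])
      have e2 : pd 1 (pd 1 f) ((1:ℝ), (0:ℝ)) = ε * (a + 2) / (1:ℝ)^2 :=
        hB ((1:ℝ),(0:ℝ)) (by norm_num [MB])
      rw [e1, e2] at h2
      norm_num at h2
      have hz : ε * (a + 2) = 0 := by linarith
      rcases mul_eq_zero.mp hz with h | h
      · exact absurd h hε0
      · linarith
    have hv1 : ∀ p ∈ MB, pd 1 (pd 1 f) p = 0 := by
      intro p hp; rw [hB p hp, ha2]; ring
    have hc1 : ∀ p ∈ MB, pd 1 f p = pd 1 f ((1:ℝ),(0:ℝ)) := by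
      intro p hp
      refine const_MB ?_ hp h1MB
      intro q hq
      have hd : HasFDerivAt (pd 1 f) (fderiv ℝ (pd 1 f) q) q := (dpd 1 q hq).hasFDerivAt
      have hz : fderiv ℝ (pd 1 f) q = 0 := clm_zero _ ((E q hq).2.1) (hv1 q hq)
      rw [hz] at hd; exact hd
    refine ⟨f ((1:ℝ),(0:ℝ)), pd 1 f ((1:ℝ),(0:ℝ)), ?_⟩
    intro p hp
    set c₁ : ℝ := pd 1 f ((1:ℝ),(0:ℝ)) with hc₁
    have hG : ∀ q ∈ MB, HasFDerivAt (fun r : ℝ×ℝ => f r + 2 * Real.log r.1 - c₁ * r.2)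
        (0 : ℝ×ℝ →L[ℝ] ℝ) q := by
      intro q hq
      have hne : q.1 ≠ 0 := ne_of_gt hq
      have hdf : HasFDerivAt f (fderiv ℝ f q) q :=
        ((smf q hq).differentiableAt (by simp)).hasFDerivAt
      have hlog : HasFDerivAt (fun r : ℝ×ℝ => Real.log r.1)
          ((q.1)⁻¹ • ContinuousLinearMap.fst ℝ ℝ ℝ) q :=
        (Real.hasDerivAt_log hne).comp_hasFDerivAt q hasFDerivAt_fst
      have hh := (hdf.add (hlog.const_mul 2)).sub (hasFDerivAt_snd.const_mul c₁)
      have hz : fderiv ℝ f q + (2:ℝ) • ((q.1)⁻¹ • ContinuousLinearMap.fst ℝ ℝ ℝ)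
          - c₁ • ContinuousLinearMap.snd ℝ ℝ ℝ = 0 := by
        apply clm_zero
        · have h0 : fderiv ℝ f q ((1:ℝ),(0:ℝ)) = a / q.1 := hA q hq
          simp only [ContinuousLinearMap.sub_apply, ContinuousLinearMap.add_apply,
            ContinuousLinearMap.smul_apply, ContinuousLinearMap.coe_fst',
            ContinuousLinearMap.coe_snd', smul_eq_mul, h0, ha2]
          field_simp
          ring
        · have h1 : fderiv ℝ f q ((0:ℝ),(1:ℝ)) = c₁ := hc1 q hq
          simp only [ContinuousLinearMap.sub_apply, ContinuousLinearMap.add_apply,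
            ContinuousLinearMap.smul_apply, ContinuousLinearMap.coe_fst',
            ContinuousLinearMap.coe_snd', smul_eq_mul, h1]
          simp
      rw [hz] at hh; exact hh
    have hval := const_MB hG hp h1MB
    simp only [Real.log_one] at hval
    norm_num at hval
    linarith
  · -- formula → soliton
    rintro ⟨c₀, c₁, hform⟩
    -- derivative of the model function
    have hFd : ∀ q : ℝ×ℝ, q.1 ≠ 0 →
        HasFDerivAt (fun r : ℝ×ℝ => -2 * Real.log r.1 + c₁ * r.2 + c₀)
          (((-2 : ℝ) • ((q.1)⁻¹ • ContinuousLinearMap.fst ℝ ℝ ℝ))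
            + c₁ • ContinuousLinearMap.snd ℝ ℝ ℝ) q := by
      intro q hq
      have h1 : HasFDerivAt (fun r : ℝ×ℝ => Real.log r.1)
          ((q.1)⁻¹ • ContinuousLinearMap.fst ℝ ℝ ℝ) q :=
        (Real.hasDerivAt_log hq).comp_hasFDerivAt q hasFDerivAt_fst
      exact ((h1.const_mul (-2)).add (hasFDerivAt_snd.const_mul c₁)).add_const c₀
    -- first derivatives of f on MB
    have hpdf : ∀ q : ℝ×ℝ, 0 < q.1 → pd 0 f q = -2/q.1 ∧ pd 1 f q = c₁ := by
      intro q hq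
      have hev : f =ᶠ[nhds q] (fun r : ℝ×ℝ => -2 * Real.log r.1 + c₁ * r.2 + c₀) :=
        Filter.eventuallyEq_of_mem (isOpen_MB.mem_nhds hq) (fun r hr => hform r hr)
      have h0 := pd_congr hev 0
      have h1 := pd_congr hev 1
      rw [pd_eq_of_hasFDerivAt (hFd q (ne_of_gt hq)) 0, ee0] at h0
      rw [pd_eq_of_hasFDerivAt (hFd q (ne_of_gt hq)) 1, ee1] at h1
      constructor
      · rw [h0]; simp [div_eq_mul_inv]
      · rw [h1]; simp
    intro i j p hp
    have hne : p.1 ≠ 0 := ne_of_gt hp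
    have hev0 : pd 0 f =ᶠ[nhds p] (fun q : ℝ×ℝ => -2/q.1) :=
      Filter.eventuallyEq_of_mem (isOpen_MB.mem_nhds hp) (fun r hr => (hpdf r hr).1)
    have hev1 : pd 1 f =ᶠ[nhds p] (fun _ : ℝ×ℝ => c₁) :=
      Filter.eventuallyEq_of_mem (isOpen_MB.mem_nhds hp) (fun r hr => (hpdf r hr).2)
    have h00 : pd 0 (pd 0 f) p = 2/p.1^2 := by
      rw [pd_congr hev0 0, pd0_cdiv (-2) hne]; ring
    have h10 : pd 1 (pd 0 f) p = 0 := by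
      rw [pd_congr hev0 1, pd1_cdiv (-2) hne]
    have h01 : pd 0 (pd 1 f) p = 0 := by
      rw [pd_congr hev1 0, pd_const]
    have h11 : pd 1 (pd 1 f) p = 0 := by
      rw [pd_congr hev1 1, pd_const]
    obtain ⟨r1, r2, r3, r4⟩ := hricS p hp
    obtain ⟨f0, f1⟩ := hpdf p hp
    have key00 : hessB C f 0 0 p + ricciSymB C 0 0 p = 0 := by
      rw [hess_formula, c1, c2, r1, h00, f0, f1]; field_simp; ring
    have key01 : hessB C f 0 1 p + ricciSymB C 0 1 p = 0 := by
      rw [hess_formula, c3, c4, r2, h01, f0, f1]; field_simp; ring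
    have key10 : hessB C f 1 0 p + ricciSymB C 1 0 p = 0 := by
      rw [hess_formula, c7, c8, r3, h10, f0, f1]; field_simp; ring
    have key11 : hessB C f 1 1 p + ricciSymB C 1 1 p = 0 := by
      rw [hess_formula, c5, c6, r4, h11, f0, f1]; field_simp; ring
    fin_cases i <;> fin_cases j <;> assumption
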